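/- Let G be a countable group acting on a countable set I, and let the generalized Bernoulli action G ↷ (Y^I, ν^{⊗I}) be the shift g·(x_i)_{i∈I} = (x_{g⁻¹i})_{i∈I}, where (Y, ν) is a probability space such that ν is not a Dirac mass. If every orbit of G ↷ I is infinite, then the generalized Bernoulli action is ergodic. -/

import Mathlib

set_option linter.unusedSectionVars false

open MeasureTheory

open scoped Pointwise symmDiff ENNReal NNReal

section Neumann

/-- B. H. Neumann: if all orbits are infinite, finite sets can be moved off themselves. -/
lemma bern_neumann {G I : Type*} [Group G] [MulAction G I]
    (horb : ∀ i : I, (MulAction.orbit G i).Infinite) (F : Finset I) :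
    ∃ g : G, ∀ a ∈ F, ∀ b ∈ F, g • a ≠ b := by
  classical
  by_contra hcon
  push_neg at hcon
  set s : Finset (I × I) := (F ×ˢ F).filter (fun p => ∃ g : G, g • p.1 = p.2) with hs
  set γ : I × I → G := fun p => if h : ∃ g : G, g • p.1 = p.2 then h.choose else 1 with hγdef
  have hcovers : ⋃ p ∈ s, (γ p) • ((MulAction.stabilizer G p.1 : Subgroup G) : Set G)
      = Set.univ := by
    ext g
    simp only [Set.mem_iUnion, Set.mem_univ, iff_true]
    obtain ⟨a, ha, b, hb, hab⟩ := hcon g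
    have hex : ∃ g' : G, g' • (a, b).1 = (a, b).2 := ⟨g, hab⟩
    refine ⟨(a, b), ?_, ?_⟩
    · simp only [hs, Finset.mem_filter, Finset.mem_product]
      exact ⟨⟨ha, hb⟩, hex⟩
    · have hγab : γ (a, b) • a = b := by
        simp only [hγdef, dif_pos hex]
        exact hex.choose_spec
      rw [mem_leftCoset_iff, SetLike.mem_coe, MulAction.mem_stabilizer_iff]
      show ((γ (a, b))⁻¹ * g) • a = a
      rw [mul_smul, hab, inv_smul_eq_iff]
      exact hγab.symm
  obtain ⟨p, hp, hfin⟩ := Subgroup.exists_finiteIndex_of_leftCoset_cover hcovers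
  have hidx : (MulAction.stabilizer G p.1).index = 0 := by
    rw [Subgroup.index, Nat.card_eq_zero]
    right
    have h1 : Infinite (MulAction.orbit G p.1) := Set.infinite_coe_iff.mpr (horb p.1)
    exact (MulAction.orbitEquivQuotientStabilizer G p.1).infinite_iff.mp h1
  exact hfin.index_ne_zero hidx

end Neumann

section Bernoulli

variable {I Y : Type*} [Countable I] [MeasurableSpace Y]

lemma bern_set_eq_rect (s : Finset I) (t : I → Set Y) :
    {x : I → Y | ∀ i ∈ s, x i ∈ t i} = ⋂ i ∈ s, (fun x : I → Y => x i) ⁻¹' t i := by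
  ext x; simp

lemma bern_rect_meas (s : Finset I) (t : I → Set Y) (ht : ∀ i, MeasurableSet (t i)) :
    MeasurableSet {x : I → Y | ∀ i ∈ s, x i ∈ t i} := by
  rw [bern_set_eq_rect]
  exact MeasurableSet.biInter s.countable_toSet fun i _ => measurable_pi_apply i (ht i)

lemma bern_single (ν : Measure Y) (μ : Measure (I → Y))
    (hprod : ∀ (s : Finset I) (t : I → Set Y), (∀ i, MeasurableSet (t i)) →
      μ {x : I → Y | ∀ i ∈ s, x i ∈ t i} = ∏ i ∈ s, ν (t i))
    (i : I) (t : Set Y) (ht : MeasurableSet t) :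
    μ ((fun x : I → Y => x i) ⁻¹' t) = ν t := by
  have h := hprod {i} (fun _ => t) (fun _ => ht)
  have heq : {x : I → Y | ∀ j ∈ ({i} : Finset I), x j ∈ t} = (fun x : I → Y => x i) ⁻¹' t := by
    ext x; simp
  rw [heq] at h
  simpa using h

lemma bern_iIndep (ν : Measure Y) (μ : Measure (I → Y))
    (hprod : ∀ (s : Finset I) (t : I → Set Y), (∀ i, MeasurableSet (t i)) →
      μ {x : I → Y | ∀ i ∈ s, x i ∈ t i} = ∏ i ∈ s, ν (t i)) :
    ProbabilityTheory.iIndep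
      (fun i : I => MeasurableSpace.comap (fun x : I → Y => x i) inferInstance) μ := by
  have h : ProbabilityTheory.iIndepFun
      (fun (i : I) (x : I → Y) => x i) μ := by
    rw [ProbabilityTheory.iIndepFun_iff_measure_inter_preimage_eq_mul]
    intro S sets hsets
    classical
    set t : I → Set Y := fun i => if i ∈ S then sets i else Set.univ with ht
    have htm : ∀ i, MeasurableSet (t i) := by
      intro i
      by_cases hi : i ∈ S
      · simpa [ht, hi] using hsets i hi
      · simp [ht, hi]
    have hset : (⋂ i ∈ S, (fun x : I → Y => x i) ⁻¹' sets i) = {x : I → Y | ∀ i ∈ S, x i ∈ t i} := by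
      ext x
      simp only [Set.mem_iInter, Set.mem_preimage, Set.mem_setOf_eq, ht]
      refine ⟨fun h i hi => ?_, fun h i hi => ?_⟩
      · simpa [hi] using h i hi
      · simpa [hi] using h i hi
    rw [hset, hprod S t htm]
    refine Finset.prod_congr rfl fun i hi => ?_
    rw [bern_single ν μ hprod i (sets i) (hsets i hi), ht]
    simp [hi]
  exact h

lemma bern_indep_sets (ν : Measure Y) (μ : Measure (I → Y))
    (hprod : ∀ (s : Finset I) (t : I → Set Y), (∀ i, MeasurableSet (t i)) →
      μ {x : I → Y | ∀ i ∈ s, x i ∈ t i} = ∏ i ∈ s, ν (t i))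
    {S T : Set I} (hST : Disjoint S T) {B C : Set (I → Y)}
    (hB : MeasurableSet[⨆ i ∈ S,
      MeasurableSpace.comap (fun x : I → Y => x i) inferInstance] B)
    (hC : MeasurableSet[⨆ i ∈ T,
      MeasurableSpace.comap (fun x : I → Y => x i) inferInstance] C) :
    μ (B ∩ C) = μ B * μ C := by
  have h := ProbabilityTheory.indep_iSup_of_disjoint
    (fun i => (measurable_pi_apply i).comap_le) (bern_iIndep ν μ hprod) hST
  exact (ProbabilityTheory.Indep_iff _ _ μ).1 h B C hB hC

lemma bern_meas_restrict {u : Set I} (s : Finset I) (ρ : s → I) (hρ : ∀ j, ρ j ∈ u)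
    {S : Set (∀ i : s, (fun _ : I => Y) (i : I))} (hS : MeasurableSet S) {B : Set (I → Y)}
    (hB : B = (fun (x : I → Y) (j : s) => x (ρ j)) ⁻¹' S) :
    MeasurableSet[⨆ i ∈ u, MeasurableSpace.comap (fun x : I → Y => x i) inferInstance]
      B := by
  subst hB
  have hmeas : Measurable[⨆ i ∈ u, MeasurableSpace.comap (fun x : I → Y => x i) inferInstance]
      (fun (x : I → Y) (j : s) => x (ρ j)) :=
    @measurable_pi_lambda _ _ _
      (⨆ i ∈ u, MeasurableSpace.comap (fun x : I → Y => x i) inferInstance) _ _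
      (fun j => Measurable.of_comap_le (le_iSup₂
        (f := fun (i : I) (_ : i ∈ u) =>
          MeasurableSpace.comap (fun x : I → Y => x i) inferInstance) (ρ j) (hρ j)))
  exact hmeas hS

/-- The π-system of finite-dimensional rectangles. -/
def bernPi (I Y : Type*) [MeasurableSpace Y] : Set (Set (I → Y)) :=
  {C | ∃ (s : Finset I) (t : I → Set Y), (∀ i, MeasurableSet (t i)) ∧
    C = {x : I → Y | ∀ i ∈ s, x i ∈ t i}}

lemma bern_isPiSystem : IsPiSystem (bernPi I Y) := by
  classical
  rintro C₁ ⟨s₁, t₁, h₁, rfl⟩ C₂ ⟨s₂, t₂, h₂, rfl⟩ -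
  refine ⟨s₁ ∪ s₂,
    fun i => (if i ∈ s₁ then t₁ i else Set.univ) ∩ (if i ∈ s₂ then t₂ i else Set.univ),
    fun i => ?_, ?_⟩
  · refine MeasurableSet.inter ?_ ?_
    · split_ifs
      · exact h₁ i
      · exact MeasurableSet.univ
    · split_ifs
      · exact h₂ i
      · exact MeasurableSet.univ
  · ext x
    simp only [Set.mem_inter_iff, Set.mem_setOf_eq, Finset.mem_union]
    constructor
    · rintro ⟨ha, hb⟩ i hi
      constructor
      · split_ifs with h
        · exact ha i h
        · trivial
      · split_ifs with h
        · exact hb i h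
        · trivial
    · intro h
      constructor
      · intro i hi
        have := (h i (Or.inl hi)).1
        rwa [if_pos hi] at this
      · intro i hi
        have := (h i (Or.inr hi)).2
        rwa [if_pos hi] at this

lemma bern_eval_measurable (i : I) :
    Measurable[MeasurableSpace.generateFrom (bernPi I Y)] (fun x : I → Y => x i) := by
  intro t ht
  refine MeasurableSpace.measurableSet_generateFrom ?_
  exact ⟨{i}, fun _ => t, fun _ => ht, by ext x; simp⟩

lemma bern_generateFrom :
    (MeasurableSpace.pi : MeasurableSpace (I → Y))
      = MeasurableSpace.generateFrom (bernPi I Y) := by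
  refine le_antisymm ?_ ?_
  · rw [← generateFrom_measurableCylinders]
    refine MeasurableSpace.generateFrom_le fun B hB => ?_
    obtain ⟨s, S, hSm, rfl⟩ := (mem_measurableCylinders _).1 hB
    have hmeas : Measurable[MeasurableSpace.generateFrom (bernPi I Y)]
        (fun (x : I → Y) (j : s) => x (j : I)) :=
      @measurable_pi_lambda _ _ _ (MeasurableSpace.generateFrom (bernPi I Y)) _ _
        (fun j => bern_eval_measurable _)
    exact hmeas hSm
  · refine MeasurableSpace.generateFrom_le ?_
    rintro C ⟨s, t, ht, rfl⟩
    exact bern_rect_meas s t ht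

lemma bern_shift {G : Type*} [Group G] [MulAction G I]
    (ν : Measure Y) [IsProbabilityMeasure ν]
    (μ : Measure (I → Y)) [IsProbabilityMeasure μ]
    (hprod : ∀ (s : Finset I) (t : I → Set Y), (∀ i, MeasurableSet (t i)) →
      μ {x : I → Y | ∀ i ∈ s, x i ∈ t i} = ∏ i ∈ s, ν (t i)) (g : G) :
    μ.map (fun (x : I → Y) (i : I) => x (g⁻¹ • i)) = μ := by
  classical
  have hσ : Measurable (fun (x : I → Y) (i : I) => x (g⁻¹ • i)) := by
    rw [measurable_pi_iff]; intro i; exact measurable_pi_apply _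
  haveI : IsProbabilityMeasure (μ.map (fun (x : I → Y) (i : I) => x (g⁻¹ • i))) :=
    Measure.isProbabilityMeasure_map hσ.aemeasurable
  refine ext_of_generate_finite (bernPi I Y) bern_generateFrom bern_isPiSystem ?_ (by simp)
  rintro C ⟨s, t, ht, rfl⟩
  rw [Measure.map_apply hσ (bern_rect_meas s t ht)]
  have hpre : (fun (x : I → Y) (i : I) => x (g⁻¹ • i)) ⁻¹' {x | ∀ i ∈ s, x i ∈ t i}
      = {x : I → Y | ∀ j ∈ s.image (fun i => g⁻¹ • i), x j ∈ t (g • j)} := by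
    ext x
    simp only [Set.mem_preimage, Set.mem_setOf_eq, Finset.mem_image]
    constructor
    · rintro h j ⟨i, hi, rfl⟩
      rw [smul_inv_smul]
      exact h i hi
    · intro h i hi
      have := h (g⁻¹ • i) ⟨i, hi, rfl⟩
      rwa [smul_inv_smul] at this
  rw [hpre, hprod _ (fun j => t (g • j)) (fun j => ht _), hprod s t ht]
  rw [Finset.prod_image (fun i _ j _ h => MulAction.injective g⁻¹ h)]
  exact Finset.prod_congr rfl fun i _ => by rw [smul_inv_smul]

end Bernoulli

section SymmDiffAux

lemma bern_meas_le_symmDiff {α : Type*} [MeasurableSpace α] (μ : Measure α) (X Z : Set α) :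
    μ X ≤ μ Z + μ (X ∆ Z) := by
  refine le_trans (measure_mono ?_) (measure_union_le _ _)
  intro x hx
  by_cases h : x ∈ Z
  · exact Or.inl h
  · exact Or.inr (Set.mem_symmDiff.2 (Or.inl ⟨hx, h⟩))

lemma bern_symmDiff_inter_subset {α : Type*} (A B C : Set α) :
    A ∆ (B ∩ C) ⊆ (A ∆ B) ∪ (A ∆ C) := by
  intro x hx
  simp only [Set.mem_symmDiff, Set.mem_inter_iff, Set.mem_union] at *
  tauto

lemma bern_sq_aux {x y e : ℝ≥0∞} (h : x ≤ y + e) (hy : y ≤ 1) (he : e ≤ 1) :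
    x * x ≤ y * y + 3 * e := by
  calc x * x ≤ (y + e) * (y + e) := mul_le_mul' h h
    _ = y * y + (y * e + (e * y + e * e)) := by ring
    _ ≤ y * y + (1 * e + (e * 1 + e * 1)) := by gcongr
    _ = y * y + 3 * e := by ring

end SymmDiffAux

set_option maxHeartbeats 2000000 in
/-- Kechris–Tsankov: if every orbit of `G ↷ I` is infinite and `ν` is not a Dirac mass,
then the generalized Bernoulli shift `G ↷ (Y^I, ν^{⊗I})` is ergodic: every invariant
measurable set has measure `0` or `1`. The product measure `μ` is characterized on
cylinder sets. -/
theorem stmt17 {G I Y : Type*} [Group G] [Countable G] [Countable I] [MulAction G I]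
    [MeasurableSpace Y] [MeasurableSingletonClass Y]
    (ν : Measure Y) [IsProbabilityMeasure ν] (hν : ∀ y : Y, ν {y} < 1)
    (horb : ∀ i : I, (MulAction.orbit G i).Infinite)
    (μ : Measure (I → Y)) [IsProbabilityMeasure μ]
    (hprod : ∀ (s : Finset I) (t : I → Set Y), (∀ i, MeasurableSet (t i)) →
      μ {x : I → Y | ∀ i ∈ s, x i ∈ t i} = ∏ i ∈ s, ν (t i)) :
    ∀ A : Set (I → Y), MeasurableSet A →
      (∀ g : G, (fun (x : I → Y) (i : I) => x (g⁻¹ • i)) ⁻¹' A = A) →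
      μ A = 0 ∨ μ A = 1 := by
  classical
  intro A hA hinv
  have halg : IsSetAlgebra (measurableCylinders (fun _ : I => Y)) :=
    ⟨empty_mem_measurableCylinders _, fun _ h => compl_mem_measurableCylinders h,
      fun _ _ hs ht => union_mem_measurableCylinders hs ht⟩
  have hdense := Measure.MeasureDense.of_generateFrom_isSetAlgebra_finite (μ := μ) halg
    generateFrom_measurableCylinders.symm
  have key : ∀ e : ℝ≥0∞, 0 < e → e ≤ 1 →
      μ A ≤ μ A * μ A + 5 * e ∧ μ A * μ A ≤ μ A + 5 * e := by
    intro e he0 he1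
    have heT : e ≠ ⊤ := (lt_of_le_of_lt he1 ENNReal.one_lt_top).ne
    obtain ⟨B, hBmem, hBd⟩ := hdense.approx A hA (measure_ne_top μ A) e.toReal
      (ENNReal.toReal_pos he0.ne' heT)
    rw [ENNReal.ofReal_toReal heT] at hBd
    obtain ⟨s, S, hSm, rfl⟩ := (mem_measurableCylinders _).1 hBmem
    obtain ⟨g₀, hg₀⟩ := bern_neumann horb s
    have hσ : Measurable (fun (x : I → Y) (i : I) => x ((g₀⁻¹)⁻¹ • i)) := by
      rw [measurable_pi_iff]; intro i; exact measurable_pi_apply _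
    have hBmeas : MeasurableSet (cylinder s S) := MeasurableSet.cylinder (α := fun _ : I => Y) s hSm
    have hmap : μ.map (fun (x : I → Y) (i : I) => x ((g₀⁻¹)⁻¹ • i)) = μ :=
      bern_shift ν μ hprod g₀⁻¹
    have hCB : μ ((fun (x : I → Y) (i : I) => x ((g₀⁻¹)⁻¹ • i)) ⁻¹' (cylinder s S))
        = μ (cylinder s S) := by
      rw [← Measure.map_apply hσ hBmeas, hmap]
    have hACAB : μ (A ∆ ((fun (x : I → Y) (i : I) => x ((g₀⁻¹)⁻¹ • i)) ⁻¹' (cylinder s S)))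
        = μ (A ∆ (cylinder s S)) := by
      have h1 : A ∆ ((fun (x : I → Y) (i : I) => x ((g₀⁻¹)⁻¹ • i)) ⁻¹' (cylinder s S))
          = (fun (x : I → Y) (i : I) => x ((g₀⁻¹)⁻¹ • i)) ⁻¹' (A ∆ (cylinder s S)) := by
        rw [Set.preimage_symmDiff, hinv g₀⁻¹]
      rw [h1, ← Measure.map_apply hσ (hA.symmDiff hBmeas), hmap]
    have hdisj : Disjoint (↑s : Set I) ((fun i => g₀ • i) '' ↑s) := by
      rw [Set.disjoint_right]
      rintro c ⟨a, ha, rfl⟩ hc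
      exact hg₀ a ha (g₀ • a) hc rfl
    have hBM := bern_meas_restrict (u := (↑s : Set I)) s (fun j => (j : I))
      (fun j => j.2) hSm (B := cylinder s S) rfl
    have hCM := bern_meas_restrict (u := ((fun i => g₀ • i) '' ↑s)) s
      (fun j => (g₀⁻¹)⁻¹ • (j : I)) (fun j => ⟨(j : I), j.2, by rw [inv_inv]⟩) hSm
      (B := (fun (x : I → Y) (i : I) => x ((g₀⁻¹)⁻¹ • i)) ⁻¹' (cylinder s S)) rfl
    have hind : μ (cylinder s S ∩
          ((fun (x : I → Y) (i : I) => x ((g₀⁻¹)⁻¹ • i)) ⁻¹' (cylinder s S)))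
        = μ (cylinder s S) * μ (cylinder s S) := by
      rw [bern_indep_sets ν μ hprod hdisj hBM hCM, hCB]
    have ha1 : μ A ≤ 1 := prob_le_one
    have hb1 : μ (cylinder s S) ≤ 1 := prob_le_one
    have hd : μ (A ∆ cylinder s S) ≤ e := hBd.le
    have hd2 : μ (A ∆ ((fun (x : I → Y) (i : I) => x ((g₀⁻¹)⁻¹ • i)) ⁻¹' (cylinder s S)))
        ≤ e := by rw [hACAB]; exact hBd.le
    have hbc : μ (A ∆ (cylinder s S ∩
          ((fun (x : I → Y) (i : I) => x ((g₀⁻¹)⁻¹ • i)) ⁻¹' (cylinder s S)))) ≤ 2 * e := by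
      calc μ (A ∆ _) ≤ μ ((A ∆ cylinder s S) ∪
            (A ∆ ((fun (x : I → Y) (i : I) => x ((g₀⁻¹)⁻¹ • i)) ⁻¹' (cylinder s S)))) :=
            measure_mono (bern_symmDiff_inter_subset _ _ _)
        _ ≤ μ (A ∆ cylinder s S) +
            μ (A ∆ ((fun (x : I → Y) (i : I) => x ((g₀⁻¹)⁻¹ • i)) ⁻¹' (cylinder s S))) :=
            measure_union_le _ _
        _ ≤ e + e := add_le_add hd hd2
        _ = 2 * e := (two_mul e).symm
    have h2 : μ (cylinder s S) ≤ μ A + e := by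
      refine le_trans (bern_meas_le_symmDiff μ _ A) ?_
      rw [symmDiff_comm]
      exact add_le_add_right hd _
    have h3 : μ A ≤ μ (cylinder s S) + e :=
      le_trans (bern_meas_le_symmDiff μ A _) (add_le_add_right hd _)
    have h4 : μ (cylinder s S ∩
          ((fun (x : I → Y) (i : I) => x ((g₀⁻¹)⁻¹ • i)) ⁻¹' (cylinder s S)))
        ≤ μ A + 2 * e := by
      refine le_trans (bern_meas_le_symmDiff μ _ A) ?_
      rw [symmDiff_comm]
      exact add_le_add_right hbc _
    constructor
    · calc μ A ≤ μ (cylinder s S ∩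
            ((fun (x : I → Y) (i : I) => x ((g₀⁻¹)⁻¹ • i)) ⁻¹' (cylinder s S))) +
            μ (A ∆ (cylinder s S ∩
            ((fun (x : I → Y) (i : I) => x ((g₀⁻¹)⁻¹ • i)) ⁻¹' (cylinder s S)))) :=
            bern_meas_le_symmDiff μ A _
        _ ≤ μ (cylinder s S) * μ (cylinder s S) + 2 * e := by
            rw [hind]; exact add_le_add_right hbc _
        _ ≤ (μ A * μ A + 3 * e) + 2 * e := add_le_add_left (bern_sq_aux h2 ha1 he1) _
        _ = μ A * μ A + 5 * e := by ring
    · calc μ A * μ A ≤ μ (cylinder s S) * μ (cylinder s S) + 3 * e :=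
            bern_sq_aux h3 hb1 he1
        _ = μ (cylinder s S ∩
            ((fun (x : I → Y) (i : I) => x ((g₀⁻¹)⁻¹ • i)) ⁻¹' (cylinder s S))) + 3 * e := by
            rw [hind]
        _ ≤ (μ A + 2 * e) + 3 * e := add_le_add_left h4 _
        _ = μ A + 5 * e := by ring
  have hones : μ A * μ A = μ A := by
    have haux : ∀ ε : ℝ≥0, 0 < ε → (5 : ℝ≥0∞) * min ((ε : ℝ≥0∞) / 5) 1 ≤ ε := by
      intro ε hε
      calc (5 : ℝ≥0∞) * min ((ε : ℝ≥0∞) / 5) 1 ≤ 5 * ((ε : ℝ≥0∞) / 5) := by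
            gcongr
            exact min_le_left _ _
        _ = ε := ENNReal.mul_div_cancel' (by norm_num) (by norm_num)
    have hpos : ∀ ε : ℝ≥0, 0 < ε → (0 : ℝ≥0∞) < min ((ε : ℝ≥0∞) / 5) 1 := by
      intro ε hε
      refine lt_min (ENNReal.div_pos ?_ (by norm_num)) one_pos
      exact_mod_cast hε.ne'
    refine le_antisymm ?_ ?_
    · refine ENNReal.le_of_forall_pos_le_add fun ε hε _ => ?_
      obtain ⟨-, h⟩ := key _ (hpos ε hε) (min_le_right _ _)
      exact h.trans (add_le_add_right (haux ε hε) _)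
    · refine ENNReal.le_of_forall_pos_le_add fun ε hε _ => ?_
      obtain ⟨h, -⟩ := key _ (hpos ε hε) (min_le_right _ _)
      exact h.trans (add_le_add_right (haux ε hε) _)
  by_cases h0 : μ A = 0
  · exact Or.inl h0
  · right
    have h1 : μ A * μ A = μ A * 1 := by rw [mul_one, hones]
    exact (ENNReal.mul_right_inj h0 (measure_ne_top μ A)).1 h1
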